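/- arXiv:1903.02383 — 2 statements merged into one kernel-verified Lean document; each statement's English description precedes it below -/
import Mathlib

section
/- Let Ω be a set and (F_i)_{i∈ℕ} an increasing sequence of σ-algebras on Ω such that (i) for each i, the measurable space (Ω, F_i) is a standard Borel space, and (ii) for every strictly increasing sequence of indices (i_k)_{k∈ℕ} and every decreasing sequence (A_k)_{k∈ℕ} of subsets of Ω such that A_k is an atom of F_{i_k} for each k, the intersection ⋂_k A_k is nonempty. If (μ_i)_{i∈ℕ} is a consistent sequence of probability measures, i.e. μ_i is a probability measure on (Ω, F_i) and the restriction of μ_{i+1} to F_i equals μ_i for every i, then there exists a probability measure μ on the σ-algebra ⨆_i F_i (the σ-algebra generated by ⋃_i F_i) whose restriction to F_i equals μ_i for every i. -/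
open Set Filter Topology
open scoped ENNReal NNReal


open MeasureTheory

/-- `A` is an atom of the σ-algebra `m` on `Ω`: `A` is `m`-measurable, nonempty, and every
`m`-measurable subset of `A` is either empty or all of `A`. -/
def IsSigmaAtom {Ω : Type*} (m : MeasurableSpace Ω) (A : Set Ω) : Prop :=
  MeasurableSet[m] A ∧ A.Nonempty ∧ ∀ B : Set Ω, MeasurableSet[m] B → B ⊆ A → B = ∅ ∨ B = A


lemma geo_le (c : ℝ≥0∞) : ∑' n : ℕ, c * 2⁻¹ ^ (n + 1) ≤ c := by
  rw [ENNReal.tsum_mul_left]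
  have h : ∑' n : ℕ, (2⁻¹ : ℝ≥0∞) ^ (n + 1) = 2⁻¹ * ∑' n : ℕ, (2⁻¹ : ℝ≥0∞) ^ n := by
    rw [← ENNReal.tsum_mul_left]
    simp [pow_succ, mul_comm]
  rw [h, ENNReal.tsum_geometric, ENNReal.one_sub_inv_two, inv_inv]
  rw [show (2⁻¹ : ℝ≥0∞) * 2 = 1 by
    rw [ENNReal.inv_mul_cancel (by norm_num) (by norm_num)]]
  simp

/-- The whole space can be approximated from inside by a compact set. -/
lemma tight_univ {α : Type*} [MeasurableSpace α] [TopologicalSpace α] [PolishSpace α]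
    [BorelSpace α] (ν : Measure α) [IsFiniteMeasure ν] {ε : ℝ≥0∞} (hε : ε ≠ 0) :
    ∃ K : Set α, IsCompact K ∧ ν Kᶜ ≤ ε := by
  cases isEmpty_or_nonempty α with
  | inl h =>
    refine ⟨∅, isCompact_empty, ?_⟩
    have : (∅ : Set α)ᶜ = ∅ := by
      simp [eq_empty_of_isEmpty]
    simp [this]
  | inr h =>
    letI := TopologicalSpace.upgradeIsCompletelyMetrizable α
    obtain ⟨u, hu⟩ := TopologicalSpace.exists_dense_seq α
    have hcover : ∀ r : ℝ, 0 < r → (⋃ i, Metric.closedBall (u i) r) = univ := by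
      intro r hr
      apply eq_univ_of_forall
      intro x
      obtain ⟨i, hi⟩ := hu.exists_dist_lt x hr
      exact mem_iUnion.2 ⟨i, Metric.mem_closedBall.2 hi.le⟩
    have main : ∀ n : ℕ, ∃ N : ℕ,
        ν (accumulate (fun i => Metric.closedBall (u i) (1 / (n + 1))) N)ᶜ ≤ ε * 2⁻¹ ^ (n + 1) := by
      intro n
      set f : ℕ → Set α := fun i => Metric.closedBall (u i) (1 / (n + 1))
      set δ := ε * 2⁻¹ ^ (n + 1) with hδ
      have hδ0 : δ ≠ 0 := by
        refine mul_ne_zero hε ?_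
        exact pow_ne_zero _ (by simp)
      have htend : Tendsto (fun N => ν (accumulate f N)) atTop (𝓝 (ν (⋃ i, f i))) :=
        tendsto_measure_iUnion_accumulate
      rw [hcover _ (by positivity)] at htend
      by_cases hδν : ν univ ≤ δ
      · exact ⟨0, le_trans (measure_mono (subset_univ _)) hδν⟩
      · push_neg at hδν
        have hlt : ν univ - δ < ν univ := by
          apply ENNReal.sub_lt_self (measure_ne_top _ _) ?_ hδ0
          exact fun h0 => by simp [h0] at hδν
        obtain ⟨N, hN⟩ := (htend.eventually (eventually_gt_nhds hlt)).exists
        refine ⟨N, ?_⟩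
        have hmeas : MeasurableSet (accumulate f N) := by
          apply MeasurableSet.biUnion (to_countable _)
          intro i _
          exact Metric.isClosed_closedBall.measurableSet
        rw [measure_compl hmeas (measure_ne_top _ _)]
        rw [tsub_le_iff_right]
        calc ν univ ≤ (ν univ - δ) + δ := le_tsub_add
        _ ≤ ν (accumulate f N) + δ := add_le_add hN.le le_rfl
        _ = δ + ν (accumulate f N) := add_comm _ _
    choose N hN using main
    set K : Set α := ⋂ n : ℕ, accumulate (fun i => Metric.closedBall (u i) (1 / (n + 1))) (N n)
      with hK
    have hKclosed : IsClosed K := by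
      apply isClosed_iInter
      intro n
      apply Set.Finite.isClosed_biUnion (finite_le_nat _)
      intro i _
      exact Metric.isClosed_closedBall
    have hKtb : TotallyBounded K := by
      rw [Metric.totallyBounded_iff]
      intro r hr
      obtain ⟨n, hn⟩ := exists_nat_one_div_lt hr
      refine ⟨u '' {i | i ≤ N n}, (finite_le_nat _).image u, ?_⟩
      intro x hx
      have hx' : x ∈ accumulate (fun i => Metric.closedBall (u i) (1 / (n + 1))) (N n) :=
        mem_iInter.1 hx n
      obtain ⟨i, hiN, hxi⟩ := mem_iUnion₂.1 hx'
      refine mem_iUnion₂.2 ⟨u i, mem_image_of_mem u hiN, ?_⟩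
      rw [Metric.mem_ball]
      calc dist x (u i) ≤ 1 / (n + 1) := Metric.mem_closedBall.1 hxi
      _ < r := hn
    refine ⟨K, TotallyBounded.isCompact_of_isClosed hKtb hKclosed, ?_⟩
    have : Kᶜ = ⋃ n : ℕ, (accumulate (fun i => Metric.closedBall (u i) (1 / (n + 1))) (N n))ᶜ := by
      rw [hK, compl_iInter]
    rw [this]
    calc ν _ ≤ ∑' (n : ℕ), ν (accumulate (fun i => Metric.closedBall (u i) (1 / (n + 1))) (N n))ᶜ :=
      measure_iUnion_le _
    _ ≤ ∑' (n : ℕ), ε * 2⁻¹ ^ (n + 1) := ENNReal.tsum_le_tsum hN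
    _ ≤ ε := geo_le ε

/-- Tightness: a finite Borel measure on a Polish space is inner regular by compact sets. -/
lemma tight_aux {α : Type*} [MeasurableSpace α] [TopologicalSpace α] [PolishSpace α]
    [BorelSpace α] (ν : Measure α) [IsFiniteMeasure ν] {s : Set α} (hs : MeasurableSet s)
    {ε : ℝ≥0∞} (hε : ε ≠ 0) :
    ∃ K, K ⊆ s ∧ IsCompact K ∧ ν (s \ K) ≤ ε := by
  obtain ⟨K₀, hK₀c, hK₀⟩ := tight_univ ν (ε := ε / 2) (by simp [hε])
  obtain ⟨C, hCs, hCc, hC⟩ := hs.exists_isClosed_diff_lt (μ := ν) (measure_ne_top ν s)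
    (ε := ε / 2) (by simp [hε])
  refine ⟨C ∩ K₀, (inter_subset_left).trans hCs, hK₀c.inter_left hCc, ?_⟩
  have : s \ (C ∩ K₀) ⊆ (s \ C) ∪ K₀ᶜ := by
    intro x hx
    rcases hx with ⟨hxs, hxn⟩
    by_cases hxC : x ∈ C
    · right; exact fun hxK => hxn ⟨hxC, hxK⟩
    · left; exact ⟨hxs, hxC⟩
  calc ν (s \ (C ∩ K₀)) ≤ ν ((s \ C) ∪ K₀ᶜ) := measure_mono this
  _ ≤ ν (s \ C) + ν K₀ᶜ := measure_union_le _ _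
  _ ≤ ε / 2 + ε / 2 := add_le_add (le_of_lt hC) hK₀
  _ = ε := ENNReal.add_halves ε


/-- Given two Polish topologies `t, s` on `α` with `borel s ≤ borel t`, there is a Polish
topology finer than both with the same Borel σ-algebra as `t`. -/
lemma refine_aux {α : Type*} (t s : TopologicalSpace α) (hpt : @PolishSpace α t)
    (hps : @PolishSpace α s) (hb : @borel α s ≤ @borel α t) :
    ∃ t' : TopologicalSpace α, t' ≤ t ∧ t' ≤ s ∧ @PolishSpace α t' ∧
      @borel α t' = @borel α t := by
  obtain ⟨B, hBc, -, hB⟩ := @TopologicalSpace.exists_countable_basis α s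
    (by letI := s; haveI := hps; exact inferInstance)
  haveI : Countable B := hBc.to_subtype
  have hBmeas : ∀ b : B, MeasurableSet[@borel α t] (b : Set α) := by
    intro b
    have hopen : IsOpen[s] (b : Set α) := hB.isOpen b.2
    exact hb _ (@MeasurableSpace.measurableSet_generateFrom α {u | IsOpen[s] u} _ hopen)
  have hclop : ∀ b : B, ∃ m : TopologicalSpace α, m ≤ t ∧ @PolishSpace α m ∧
      IsOpen[m] (b : Set α) := by
    intro b
    obtain ⟨m, hm1, hm2, _, hm4⟩ :=
      @MeasurableSet.isClopenable α t hpt (@borel α t) (@BorelSpace.mk α t (@borel α t) rfl) _ (hBmeas b)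
    exact ⟨m, hm1, hm2, hm4⟩
  choose m hm1 hm2 hm3 using hclop
  obtain ⟨t', ht'm, ht't, hpt'⟩ :=
    @PolishSpace.exists_polishSpace_forall_le α B _ t hpt m hm1 hm2
  refine ⟨t', ht't, ?_, hpt', ?_⟩
  · -- t' ≤ s
    have hgen : s = TopologicalSpace.generateFrom B :=
      @TopologicalSpace.IsTopologicalBasis.eq_generateFrom α s B hB
    rw [hgen]
    apply le_generateFrom
    intro b hbB
    exact (TopologicalSpace.le_def.1 (ht'm ⟨b, hbB⟩)) _ (hm3 ⟨b, hbB⟩)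
  · exact MeasureTheory.borel_eq_borel_of_le hpt' hpt ht't


/-- A monotone sequence of standard Borel σ-algebras can be realized by an increasing
sequence of Polish topologies. -/
lemma topo_seq {Ω : Type*} (F : ℕ → MeasurableSpace Ω) (hmono : Monotone F)
    (hstd : ∀ i, @StandardBorelSpace Ω (F i)) :
    ∃ σ : ℕ → TopologicalSpace Ω, (∀ n, @PolishSpace Ω (σ n)) ∧
      (∀ n, F n = @borel Ω (σ n)) ∧ (∀ m n, m ≤ n → σ n ≤ σ m) := by
  have base : ∀ n : ℕ, ∃ τ : TopologicalSpace Ω, @PolishSpace Ω τ ∧ F n = @borel Ω τ := by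
    intro n
    obtain ⟨τ, hbs, hps⟩ := (hstd n).polish
    exact ⟨τ, hps, hbs.measurable_eq⟩
  choose τ hτp hτb using base
  have step : ∀ (n : ℕ) (x : {σn : TopologicalSpace Ω // @PolishSpace Ω σn ∧ F n = @borel Ω σn}),
      ∃ σ' : TopologicalSpace Ω, (@PolishSpace Ω σ' ∧ F (n + 1) = @borel Ω σ') ∧ σ' ≤ x.1 := by
    rintro n ⟨σn, hp, hbeq⟩
    obtain ⟨t', h1, h2, h3, h4⟩ := refine_aux (τ (n + 1)) σn (hτp (n + 1)) hp
      (by rw [← hτb (n + 1), ← hbeq]; exact hmono (Nat.le_succ n))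
    exact ⟨t', ⟨h3, by rw [hτb (n + 1), h4]⟩, h2⟩
  let S : (n : ℕ) → {σn : TopologicalSpace Ω // @PolishSpace Ω σn ∧ F n = @borel Ω σn} :=
    Nat.rec ⟨τ 0, hτp 0, hτb 0⟩
      (fun n x => ⟨(step n x).choose, (step n x).choose_spec.1⟩)
  have hstep : ∀ n, (S (n + 1)).1 ≤ (S n).1 := fun n => (step n (S n)).choose_spec.2
  refine ⟨fun n => (S n).1, fun n => (S n).2.1, fun n => (S n).2.2, ?_⟩
  intro m n hmn
  exact antitone_nat_of_succ_le (f := fun n => (S n).1) hstep hmn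


/-- Core compactness lemma: a decreasing sequence of measurable sets with measures
bounded below by a positive constant has nonempty intersection. -/
lemma core_nonempty {Ω : Type*} (F : ℕ → MeasurableSpace Ω) (hmono : Monotone F)
    (hstd : ∀ i, @StandardBorelSpace Ω (F i))
    (μ : (i : ℕ) → @Measure Ω (F i)) (hfin : ∀ i, @IsFiniteMeasure Ω (F i) (μ i))
    (hagree : ∀ i j, i ≤ j → ∀ s, MeasurableSet[F i] s → μ j s = μ i s)
    (t : ℕ → Set Ω) (htm : ∀ n, MeasurableSet[F n] (t n)) (hta : Antitone t)
    {ε : ℝ≥0∞} (hε0 : ε ≠ 0) (hεtop : ε ≠ ⊤) (hεle : ∀ n, ε ≤ μ n (t n)) :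
    (⋂ n, t n).Nonempty := by
  obtain ⟨σ, hσp, hσb, hσle⟩ := topo_seq F hmono hstd
  have hK : ∀ n, ∃ K, K ⊆ t n ∧ @IsCompact Ω (σ n) K ∧ μ n (t n \ K) ≤ ε * 2⁻¹ ^ (n + 2) := by
    intro n
    exact @tight_aux Ω (F n) (σ n) (hσp n) (@BorelSpace.mk Ω (σ n) (F n) (hσb n)) (μ n)
      (hfin n) (t n) (htm n)
      (ε * 2⁻¹ ^ (n + 2)) (mul_ne_zero hε0 (pow_ne_zero _ (by simp)))
  choose K hKsub hKcomp hKle using hK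
  have hKmeas : ∀ k, MeasurableSet[F k] (K k) := by
    intro k
    have hcl : IsClosed[σ k] (K k) :=
      @IsCompact.isClosed Ω (σ k) (by letI := σ k; haveI := hσp k; infer_instance) (K k) (hKcomp k)
    have hopen : IsOpen[σ k] (K k)ᶜ := (@isOpen_compl_iff Ω (K k) (σ k)).2 hcl
    have h1 : MeasurableSet[@borel Ω (σ k)] (K k)ᶜ :=
      @MeasurableSpace.measurableSet_generateFrom Ω {u | IsOpen[σ k] u} _ hopen
    rw [hσb k]
    simpa using h1.compl
  set D : ℕ → Set Ω := fun n => ⋂ k ∈ Finset.range (n + 1), K k with hD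
  have hDanti : Antitone D := by
    intro a b hab x hx
    simp only [hD, mem_iInter, Finset.mem_range] at hx ⊢
    intro k hk
    exact hx k (by omega)
  have hDK : ∀ n, D n ⊆ K n := by
    intro n x hx
    simp only [hD, mem_iInter, Finset.mem_range] at hx
    exact hx n (by omega)
  have hne : ∀ n, (D n).Nonempty := by
    intro n
    rw [nonempty_iff_ne_empty]
    intro hemp
    have hcover : t n ⊆ ⋃ k ∈ Finset.range (n + 1), (t k \ K k) := by
      intro x hx
      have : x ∉ D n := by rw [hemp]; exact notMem_empty x
      simp only [hD, mem_iInter, not_forall] at this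
      obtain ⟨k, hk, hxk⟩ := this
      refine mem_biUnion hk ⟨hta (Finset.mem_range_succ_iff.1 hk) hx, hxk⟩
    have hbound : μ n (t n) ≤ ε * 2⁻¹ := by
      calc μ n (t n) ≤ μ n (⋃ k ∈ Finset.range (n + 1), (t k \ K k)) := measure_mono hcover
      _ ≤ ∑ k ∈ Finset.range (n + 1), μ n (t k \ K k) := measure_biUnion_finset_le _ _
      _ = ∑ k ∈ Finset.range (n + 1), μ k (t k \ K k) := by
          apply Finset.sum_congr rfl
          intro k hk
          exact hagree k n (Finset.mem_range_succ_iff.1 hk) _ ((htm k).diff (hKmeas k))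
      _ ≤ ∑ k ∈ Finset.range (n + 1), ε * 2⁻¹ ^ (k + 2) :=
          Finset.sum_le_sum fun k _ => hKle k
      _ ≤ ∑' k : ℕ, ε * 2⁻¹ ^ (k + 2) := ENNReal.sum_le_tsum _
      _ = ∑' k : ℕ, (ε * 2⁻¹) * 2⁻¹ ^ (k + 1) := by
          congr 1; funext k; ring
      _ ≤ ε * 2⁻¹ := geo_le _
    have : ε < ε := by
      calc ε ≤ μ n (t n) := hεle n
      _ ≤ ε * 2⁻¹ := hbound
      _ = ε / 2 := by rw [div_eq_mul_inv]
      _ < ε := ENNReal.half_lt_self hε0 hεtop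
    exact lt_irrefl _ this
  haveI : Nonempty Ω := ⟨(hne 0).some⟩
  have hfne : (⨅ n, 𝓟 (D n)).NeBot := by
    apply Filter.iInf_neBot_of_directed
    · intro a b
      exact ⟨max a b, principal_mono.2 (hDanti (le_max_left a b)),
        principal_mono.2 (hDanti (le_max_right a b))⟩
    · exact fun n => principal_neBot_iff.2 (hne n)
  let U : Ultrafilter Ω := @Ultrafilter.of Ω (⨅ n, 𝓟 (D n)) hfne
  have hU : (U : Filter Ω) ≤ ⨅ n, 𝓟 (D n) := Ultrafilter.of_le _
  have hUK : ∀ n, (U : Filter Ω) ≤ 𝓟 (K n) := fun n =>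
    le_trans hU (le_trans (iInf_le _ n) (principal_mono.2 (hDK n)))
  have hyall : ∀ n, ∃ y ∈ K n, (U : Filter Ω) ≤ @nhds Ω (σ n) y := fun n =>
    @IsCompact.ultrafilter_le_nhds Ω (σ n) (K n) (hKcomp n) U (hUK n)
  choose y hyK hy using hyall
  have heq : ∀ m n, m ≤ n → y n = y m := by
    intro m n hmn
    have hcont : Continuous[σ n, σ m] id := continuous_id_of_le (hσle m n hmn)
    have h1 : (U : Filter Ω) ≤ @nhds Ω (σ m) (y n) := by
      have h2 := @Continuous.tendsto Ω Ω (σ n) (σ m) id hcont (y n)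
      have h3 := h2.mono_left (hy n)
      simpa [Filter.tendsto_id'] using h3
    letI := σ m
    haveI := hσp m
    exact eq_of_nhds_neBot (neBot_of_le (le_inf h1 (hy m)))
  refine ⟨y 0, mem_iInter.2 fun n => ?_⟩
  exact hKsub n (heq 0 n (Nat.zero_le n) ▸ hyK n)

/-- Parthasarathy's extension theorem: an increasing sequence of σ-algebras forming a
standard system carries an extension of any consistent sequence of probability measures
to the generated σ-algebra `⨆ i, F i`. -/
theorem parthasarathy_extension {Ω : Type*} (F : ℕ → MeasurableSpace Ω) (hmono : Monotone F)
    (hstd : ∀ i, @StandardBorelSpace Ω (F i))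
    (hatoms : ∀ idx : ℕ → ℕ, StrictMono idx → ∀ A : ℕ → Set Ω, Antitone A →
      (∀ k, IsSigmaAtom (F (idx k)) (A k)) → (⋂ k, A k).Nonempty)
    (μ : (i : ℕ) → @Measure Ω (F i))
    (hprob : ∀ i, @IsProbabilityMeasure Ω (F i) (μ i))
    (hconsistent : ∀ i, @Measure.trim Ω (F i) (F (i + 1)) (μ (i + 1)) (hmono (Nat.le_succ i))
      = μ i) :
    ∃ ν : @Measure Ω (⨆ i, F i),
      @IsProbabilityMeasure Ω (⨆ i, F i) ν ∧
      ∀ i, @Measure.trim Ω (F i) (⨆ j, F j) ν (le_iSup F i) = μ i := by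
  classical
  -- extended consistency
  have hagree : ∀ i j, i ≤ j → ∀ s, MeasurableSet[F i] s → μ j s = μ i s := by
    intro i j hij
    induction j, hij using Nat.le_induction with
    | base => intro s _; rfl
    | succ j hij ih =>
      intro s hs
      have h1 : μ (j + 1) s = μ j s := by
        conv_rhs => rw [← hconsistent j]
        exact (MeasureTheory.trim_measurableSet_eq (hmono (Nat.le_succ j)) (hmono hij s hs)).symm
      rw [h1]
      exact ih s hs
  have hfin : ∀ i, @IsFiniteMeasure Ω (F i) (μ i) := fun i => by
    haveI := hprob i; infer_instance
  -- the premeasure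
  set m' : Set Ω → ℝ≥0∞ := fun s => ⨅ (i : ℕ) (_ : MeasurableSet[F i] s), μ i s with hm'def
  have hm'_eq : ∀ {i : ℕ} {s : Set Ω}, MeasurableSet[F i] s → m' s = μ i s := by
    intro i s hs
    apply le_antisymm (iInf₂_le i hs)
    refine le_iInf₂ fun j hj => ?_
    rcases le_total i j with h | h
    · rw [hagree i j h s hs]
    · rw [← hagree j i h s hj]
  have hm'_empty : m' ∅ = 0 := by
    rw [hm'_eq (@MeasurableSet.empty Ω (F 0))]
    exact measure_empty
  have hm'_top : ∀ {s : Set Ω}, (∀ i, ¬ MeasurableSet[F i] s) → m' s = ⊤ := by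
    intro s hs
    rw [hm'def]
    simp [hs]
  -- countable subadditivity of the premeasure on the algebra
  have hB : ∀ (i₀ : ℕ) (s : Set Ω), MeasurableSet[F i₀] s → ∀ c : ℕ → Set Ω,
      s ⊆ ⋃ n, c n → m' s ≤ ∑' n, m' (c n) := by
    intro i₀ s hs c hc
    by_cases hcm : ∀ n, ∃ i, MeasurableSet[F i] (c n)
    · choose j hj using hcm
      set e : ℕ → ℕ := fun n => i₀ + n + (Finset.range (n + 1)).sup j with he
      have hemono : Monotone e := by
        intro a b hab
        have : (Finset.range (a + 1)).sup j ≤ (Finset.range (b + 1)).sup j :=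
          Finset.sup_mono (Finset.range_subset_range.2 (by omega))
        simp only [he]
        omega
      have hei₀ : ∀ n, i₀ ≤ e n := fun n => by simp only [he]; omega
      have hej : ∀ k n, k ≤ n → j k ≤ e n := by
        intro k n hkn
        have : j k ≤ (Finset.range (n + 1)).sup j :=
          Finset.le_sup (Finset.mem_range_succ_iff.2 hkn)
        simp only [he]; omega
      set g : ℕ → Set Ω := fun n => s \ ⋃ k ∈ Finset.range (n + 1), c k with hg
      have hganti : Antitone g := by
        intro a b hab x hx
        refine ⟨hx.1, fun hmem => hx.2 ?_⟩
        obtain ⟨k, hk, hxk⟩ := mem_iUnion₂.1 hmem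
        exact mem_iUnion₂.2 ⟨k, Finset.mem_range_succ_iff.2
          (le_trans (Finset.mem_range_succ_iff.1 hk) hab), hxk⟩
      have hgmeas : ∀ n, MeasurableSet[F (e n)] (g n) := by
        intro n
        apply (hmono (hei₀ n) s hs).diff
        apply MeasurableSet.biUnion (Finset.range (n + 1)).countable_toSet
        intro k hk
        exact hmono (hej k n (Finset.mem_range_succ_iff.1 hk)) _ (hj k)
      have hkey : ∀ δ : ℝ≥0∞, δ ≠ 0 → ∃ n, μ (e n) (g n) < δ := by
        intro δ hδ
        by_contra hcon
        push_neg at hcon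
        have hδ1 : min δ 1 ≠ 0 :=
          ne_of_gt (lt_min (pos_iff_ne_zero.2 hδ) zero_lt_one)
        have hδtop : min δ 1 ≠ ⊤ :=
          ne_top_of_le_ne_top ENNReal.one_ne_top (min_le_right _ _)
        have hnonempty : (⋂ n, g n).Nonempty := by
          refine core_nonempty (fun n => F (e n)) (fun a b hab => hmono (hemono hab))
            (fun n => hstd (e n)) (fun n => μ (e n)) (fun n => hfin (e n))
            (fun a b hab u hu => hagree (e a) (e b) (hemono hab) u hu)
            g hgmeas hganti hδ1 hδtop (fun n => le_trans (min_le_left _ _) (hcon n))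
        obtain ⟨x, hx⟩ := hnonempty
        have hx0 : x ∈ s := (mem_iInter.1 hx 0).1
        obtain ⟨n, hxn⟩ := mem_iUnion.1 (hc hx0)
        exact (mem_iInter.1 hx n).2 (mem_iUnion₂.2 ⟨n, by simp, hxn⟩)
      -- conclude
      refine ENNReal.le_of_forall_pos_le_add fun δ hδ hlt => ?_
      obtain ⟨n, hn⟩ := hkey δ (by exact_mod_cast hδ.ne')
      have hsub : s ⊆ g n ∪ ⋃ k ∈ Finset.range (n + 1), c k := by
        intro x hx
        by_cases hmem : x ∈ ⋃ k ∈ Finset.range (n + 1), c k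
        · exact Or.inr hmem
        · exact Or.inl ⟨hx, hmem⟩
      calc m' s = μ (e n) s := by
            rw [hm'_eq (hmono (hei₀ n) s hs)]
      _ ≤ μ (e n) (g n ∪ ⋃ k ∈ Finset.range (n + 1), c k) := measure_mono hsub
      _ ≤ μ (e n) (g n) + μ (e n) (⋃ k ∈ Finset.range (n + 1), c k) := measure_union_le _ _
      _ ≤ δ + ∑ k ∈ Finset.range (n + 1), μ (e n) (c k) :=
            add_le_add hn.le (measure_biUnion_finset_le _ _)
      _ = δ + ∑ k ∈ Finset.range (n + 1), m' (c k) := by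
            congr 1
            apply Finset.sum_congr rfl
            intro k hk
            rw [hm'_eq (hj k)]
            exact hagree (j k) (e n) (hej k n (Finset.mem_range_succ_iff.1 hk)) _ (hj k)
      _ ≤ δ + ∑' k : ℕ, m' (c k) := add_le_add le_rfl (ENNReal.sum_le_tsum _)
      _ = (∑' k : ℕ, m' (c k)) + δ := add_comm _ _
    · push_neg at hcm
      obtain ⟨n, hn⟩ := hcm
      calc m' s ≤ ⊤ := le_top
      _ = m' (c n) := (hm'_top hn).symm
      _ ≤ ∑' k, m' (c k) := ENNReal.le_tsum n
  -- the outer measure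
  set ν' : OuterMeasure Ω := OuterMeasure.ofFunction m' hm'_empty with hν'
  have hν'_eq : ∀ {i : ℕ} {s : Set Ω}, MeasurableSet[F i] s → ν' s = m' s := by
    intro i s hs
    apply le_antisymm (OuterMeasure.ofFunction_le s)
    rw [OuterMeasure.ofFunction_apply]
    exact le_iInf₂ fun c hc => hB i s hs c hc
  have hcar : ∀ (i : ℕ) (s : Set Ω), MeasurableSet[F i] s →
      MeasurableSet[ν'.caratheodory] s := by
    intro i s hs
    apply OuterMeasure.ofFunction_caratheodory
    intro u
    by_cases hum : ∃ j, MeasurableSet[F j] u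
    · obtain ⟨j, hj⟩ := hum
      set M := max i j with hM
      have hsM : MeasurableSet[F M] s := hmono (le_max_left i j) s hs
      have huM : MeasurableSet[F M] u := hmono (le_max_right i j) u hj
      rw [hm'_eq (huM.inter hsM), hm'_eq (huM.diff hsM), hm'_eq huM]
      exact le_of_eq (@measure_inter_add_diff Ω (F M) (μ M) s u hsM)
    · push_neg at hum
      rw [hm'_top hum]
      exact le_top
  have hle : (⨆ i, F i) ≤ ν'.caratheodory := by
    apply iSup_le
    intro i s hs
    exact hcar i s hs
  set G : MeasurableSpace Ω := ⨆ i, F i with hG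
  set ν : @Measure Ω G := @OuterMeasure.toMeasure Ω G ν' hle with hν
  have hν_apply : ∀ {s : Set Ω}, MeasurableSet[G] s → ν s = ν' s :=
    fun hs => @toMeasure_apply Ω G ν' hle _ hs
  refine ⟨ν, ?_, ?_⟩
  · refine @IsProbabilityMeasure.mk Ω G ν ?_
    rw [hν_apply (@MeasurableSet.univ Ω G), hν'_eq (@MeasurableSet.univ Ω (F 0)),
      hm'_eq (@MeasurableSet.univ Ω (F 0))]
    exact (hprob 0).measure_univ
  · intro i
    refine @Measure.ext Ω (F i) _ _ (fun s hs => ?_)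
    rw [MeasureTheory.trim_measurableSet_eq (le_iSup F i) hs]
    rw [hν_apply (le_iSup F i s hs), hν'_eq hs, hm'_eq hs]
end

section
/- Fix ε ∈ (0,1). For x = (x₁, x₂) ∈ ℝ² with x₁ ≥ 1 and x₂ ≥ 1, let ‖x‖ = √(x₁² + x₂²), m(x) = (‖x‖/2)^{1+ε}, f(x) = m(x)/(2x₁²), g(x) = m(x)/(2x₂), and b(x) = −(1/(2x₂²) + 1/(x₁x₂))·(‖x‖²/2)^{1+ε}. Then, with a₁₁(x) = x₁² f(x)² and a₂₂(x) = g(x)², the drift condition of the Khasminskii non-explosion test holds with equality on the left-hand side: a₁₁(x) + a₂₂(x) + 2 x₁·(x₁ f(x)²) + 2 x₂·(b(x) − f(x) g(x)) ≤ 0. Equivalently, m(x)²·(1/(4x₁²) + 1/(4x₂²)) ≤ (1/x₂ + 2/x₁)·(‖x‖²/2)^{1+ε}. -/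
/-! Substituting the coefficients, the drift equals
`m² (1/(4x₁²) + 1/(4x₂²)) - (1/x₂ + 2/x₁) (‖x‖²/2)^{1+ε}`, because the `x₁ f²` term of `b̂`
cancels against `f g`. It is nonpositive since `m² = (‖x‖²/4)^{1+ε} ≤ (‖x‖²/2)^{1+ε}` and, for
`x₁, x₂ ≥ 1`, `1/(4xᵢ²) ≤ 1/xᵢ`. -/

namespace Real

lemma half_rpow_sq_le_sq_half_rpow {r p : ℝ} (hr : 0 ≤ r) (hp : 0 ≤ p) :
    ((r / 2) ^ p) ^ 2 ≤ (r ^ 2 / 2) ^ p := by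
  rw [rpow_pow_comm (by positivity)]
  exact rpow_le_rpow (by positivity) (by nlinarith [sq_nonneg r]) hp

end Real

lemma one_div_four_mul_sq_le_one_div {x : ℝ} (hx : 1 ≤ 4 * x) : 1 / (4 * x ^ 2) ≤ 1 / x := by
  rw [div_le_div_iff₀ (by nlinarith) (by linarith)]
  nlinarith

lemma example_one_drift_eq {x₁ x₂ : ℝ} (hx₁ : x₁ ≠ 0) (hx₂ : x₂ ≠ 0) (m P : ℝ) :
    x₁ ^ 2 * (m / (2 * x₁ ^ 2)) ^ 2 + (m / (2 * x₂)) ^ 2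
        + 2 * x₁ * (x₁ * (m / (2 * x₁ ^ 2)) ^ 2)
        + 2 * x₂ * (-(1 / (2 * x₂ ^ 2) + 1 / (x₁ * x₂)) * P - m / (2 * x₁ ^ 2) * (m / (2 * x₂)))
      = m ^ 2 * (1 / (4 * x₁ ^ 2) + 1 / (4 * x₂ ^ 2)) - (1 / x₂ + 2 / x₁) * P := by
  field_simp
  ring

/-- Verification of the second Khasminskii non-explosion (drift) condition in Example 1 of the
paper: for `x₁, x₂ ≥ 1`, with `‖x‖ = √(x₁² + x₂²)`, `m = (‖x‖/2)^{1+ε}`, `f = m/(2x₁²)`,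
`g = m/(2x₂)`, `b = -(1/(2x₂²) + 1/(x₁x₂))·(‖x‖²/2)^{1+ε}`, `a₁₁ = x₁²f²`, `a₂₂ = g²`, one has
`a₁₁ + a₂₂ + 2x₁·(x₁f²) + 2x₂·(b - fg) ≤ 0`; equivalently,
`m²·(1/(4x₁²) + 1/(4x₂²)) ≤ (1/x₂ + 2/x₁)·(‖x‖²/2)^{1+ε}`. -/
theorem example_one_drift_condition
    (ε : ℝ) (hε : ε ∈ Set.Ioo (0 : ℝ) 1)
    (x₁ x₂ : ℝ) (hx₁ : 1 ≤ x₁) (hx₂ : 1 ≤ x₂)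
    (nrm m f g b a₁₁ a₂₂ : ℝ)
    (hnrm : nrm = Real.sqrt (x₁ ^ 2 + x₂ ^ 2))
    (hm : m = (nrm / 2) ^ (1 + ε))
    (hf : f = m / (2 * x₁ ^ 2))
    (hg : g = m / (2 * x₂))
    (hb : b = -(1 / (2 * x₂ ^ 2) + 1 / (x₁ * x₂)) * (nrm ^ 2 / 2) ^ (1 + ε))
    (ha₁₁ : a₁₁ = x₁ ^ 2 * f ^ 2)
    (ha₂₂ : a₂₂ = g ^ 2) :
    a₁₁ + a₂₂ + 2 * x₁ * (x₁ * f ^ 2) + 2 * x₂ * (b - f * g) ≤ 0 ∧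
    m ^ 2 * (1 / (4 * x₁ ^ 2) + 1 / (4 * x₂ ^ 2))
      ≤ (1 / x₂ + 2 / x₁) * (nrm ^ 2 / 2) ^ (1 + ε) := by
  have hm_sq : m ^ 2 ≤ (nrm ^ 2 / 2) ^ (1 + ε) :=
    hm ▸ Real.half_rpow_sq_le_sq_half_rpow (hnrm ▸ Real.sqrt_nonneg _) (by linarith [hε.1])
  have hcoeff : 1 / (4 * x₁ ^ 2) + 1 / (4 * x₂ ^ 2) ≤ 1 / x₂ + 2 / x₁ := by
    have h₁ := one_div_four_mul_sq_le_one_div (x := x₁) (by linarith)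
    have h₂ := one_div_four_mul_sq_le_one_div (x := x₂) (by linarith)
    have : 1 / x₁ ≤ 2 / x₁ := div_le_div_of_nonneg_right one_le_two (by linarith)
    linarith
  have hbound : m ^ 2 * (1 / (4 * x₁ ^ 2) + 1 / (4 * x₂ ^ 2))
      ≤ (1 / x₂ + 2 / x₁) * (nrm ^ 2 / 2) ^ (1 + ε) := by
    rw [mul_comm (1 / x₂ + 2 / x₁)]
    exact mul_le_mul hm_sq hcoeff (by positivity) (hm_sq.trans' (sq_nonneg m))
  refine ⟨?_, hbound⟩
  subst ha₁₁ ha₂₂ hf hg hb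
  rw [example_one_drift_eq (by positivity) (by positivity)]
  exact sub_nonpos.mpr hbound
end
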